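/- arXiv:2309.14963 — 4 statements merged into one kernel-verified Lean document; each statement's English description precedes it below -/
import Mathlib

section
/- Let ℓ be an odd prime, V a 2-dimensional F_ℓ-vector space with nondegenerate alternating form ω, and S, S* a basis of V. Every non-diagonal Lagrangian subspace of V × V (with the product symplectic form) has a unique basis of the form {(S, aS + bS*), (S*, cS + dS*)} with a,b,c,d ∈ F_ℓ and ad − bc = −1; conversely every such quadruple determines a non-diagonal Lagrangian subspace. Hence non-diagonal Lagrangians are in bijection with {(a,b,c,d) ∈ F_ℓ^4 : ad − bc = −1}. -/
/-!
A non-diagonal Lagrangian `K` meets `0 × V` trivially and has dimension `2 = dim V`, so it is the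
graph of an endomorphism `φ` of `V`; a graph determines its map, which gives uniqueness. Writing
`φ S = aS + bS*` and `φ S* = cS + dS*`, isotropy of `K` amounts to
`B((S, φ S), (S*, φ S*)) = ω(S, S*) + ω(φ S, φ S*) = 1 + (ad - bc) = 0`.
Conversely, when `ad - bc = -1` the vectors `φ S, φ S*` pair to `-1`, hence are independent,
so the graph also meets `V × 0` trivially.
-/

open Module Submodule

namespace LinearMap.BilinForm.IsAlt

variable {R M : Type*} [CommRing R] [AddCommGroup M] [Module R M] {ω : LinearMap.BilinForm R M}

theorem apply_smul_add_smul (h : ω.IsAlt) (x y : M) (a b c d : R) :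
    ω (a • x + b • y) (c • x + d • y) = (a * d - b * c) * ω x y := by
  simp only [map_add, map_smul, LinearMap.add_apply, LinearMap.smul_apply, smul_eq_mul,
    h.self_eq_zero, ← h.neg_eq x y]
  ring

theorem apply_eq_zero_of_mem_span_pair (h : ω.IsAlt) {u w x y : M} (huw : ω u w = 0)
    (hx : x ∈ span R {u, w}) (hy : y ∈ span R {u, w}) : ω x y = 0 := by
  obtain ⟨a, b, rfl⟩ := mem_span_pair.mp hx
  obtain ⟨c, d, rfl⟩ := mem_span_pair.mp hy
  rw [h.apply_smul_add_smul, huw, mul_zero]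

theorem linearIndependent_pair [NoZeroDivisors R] (h : ω.IsAlt) {x y : M} (hxy : ω x y ≠ 0) :
    LinearIndependent R ![x, y] := by
  refine LinearIndependent.pair_iff.mpr fun s t hst => ?_
  have hs := h.apply_smul_add_smul x y s t 0 1
  have ht := h.apply_smul_add_smul x y s t 1 0
  simp only [hst, map_zero, LinearMap.zero_apply, mul_one, mul_zero, sub_zero, zero_sub] at hs ht
  exact ⟨(mul_eq_zero.mp hs.symm).resolve_right hxy,
    neg_eq_zero.mp ((mul_eq_zero.mp ht.symm).resolve_right hxy)⟩

end LinearMap.BilinForm.IsAlt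

section Prod

variable {R M N : Type*} [CommRing R] [AddCommGroup M] [Module R M] [AddCommGroup N] [Module R N]

theorem LinearIndependent.of_map_pair (f : M →ₗ[R] N) {u w : M}
    (h : LinearIndependent R ![f u, f w]) : LinearIndependent R ![u, w] :=
  LinearIndependent.pair_iff.mpr fun s t hst => h.eq_zero_of_pair (by simpa using congrArg f hst)

theorem LinearIndependent.eq_zero_of_mem_span_pair_of_map_eq_zero (f : M →ₗ[R] N) {u w p : M}
    (h : LinearIndependent R ![f u, f w]) (hp : p ∈ span R {u, w}) (hfp : f p = 0) : p = 0 := by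
  obtain ⟨s, t, rfl⟩ := mem_span_pair.mp hp
  obtain ⟨rfl, rfl⟩ := h.eq_zero_of_pair (by simpa using hfp)
  simp

theorem Submodule.snd_eq_of_mk_mem {L : Submodule R (M × N)}
    (hL : ∀ n, ((0, n) : M × N) ∈ L → n = 0) {m : M} {n n' : N} (h : (m, n) ∈ L)
    (h' : (m, n') ∈ L) : n = n' :=
  sub_eq_zero.mp (hL _ (by simpa using sub_mem h h'))

theorem eq_zero_of_zero_mk_mem_span_pair {x x' : M} (hx : LinearIndependent R ![x, x'])
    {y y' n : N} (h : ((0, n) : M × N) ∈ span R {(x, y), (x', y')}) : n = 0 :=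
  congrArg Prod.snd <| LinearIndependent.eq_zero_of_mem_span_pair_of_map_eq_zero
    (LinearMap.fst R M N) (u := (x, y)) (w := (x', y')) hx h rfl

theorem eq_zero_of_mk_zero_mem_span_pair {y y' : N} (hy : LinearIndependent R ![y, y'])
    {x x' m : M} (h : ((m, 0) : M × N) ∈ span R {(x, y), (x', y')}) : m = 0 :=
  congrArg Prod.fst <| LinearIndependent.eq_zero_of_mem_span_pair_of_map_eq_zero
    (LinearMap.snd R M N) (u := (x, y)) (w := (x', y')) hy h rfl

variable {K V W : Type*} [Field K] [AddCommGroup V] [Module K V] [AddCommGroup W] [Module K W]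

theorem finrank_span_pair {u w : V} (h : LinearIndependent K ![u, w]) :
    finrank K (span K {u, w}) = 2 := by
  have := finrank_span_eq_card h
  rwa [Matrix.range_cons_cons_empty, Fintype.card_fin] at this

theorem Submodule.exists_mk_mem_of_finrank_eq [FiniteDimensional K V] (L : Submodule K (V × W))
    (hL : ∀ w, ((0, w) : V × W) ∈ L → w = 0) (hrank : finrank K L = finrank K V) (v : V) :
    ∃ w, (v, w) ∈ L := by
  set f := (LinearMap.fst K V W).comp L.subtype
  have hf : Function.Injective f := by
    refine (injective_iff_map_eq_zero f).mpr fun x hx => Subtype.ext (Prod.ext hx (hL _ ?_))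
    have hx' : ((x : V × W).1, (x : V × W).2) ∈ L := x.2
    rwa [show (x : V × W).1 = 0 from hx] at hx'
  have : FiniteDimensional K L := Module.Finite.of_injective f hf
  obtain ⟨x, rfl⟩ := (LinearMap.injective_iff_surjective_of_finrank_eq_finrank hrank).mp hf v
  exact ⟨_, x.2⟩

end Prod

section GraphSpan

variable {K V : Type*} [Field K] [AddCommGroup V] [Module K V] {S Sstar : V}

/-- The graph of the endomorphism `S ↦ aS + bS*`, `S* ↦ cS + dS*`, where `q = (a, b, c, d)`. -/
def graphSpan (S Sstar : V) (q : K × K × K × K) : Submodule K (V × V) :=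
  span K {(S, q.1 • S + q.2.1 • Sstar), (Sstar, q.2.2.1 • S + q.2.2.2 • Sstar)}

theorem mk_mem_graphSpan_left (q : K × K × K × K) :
    (S, q.1 • S + q.2.1 • Sstar) ∈ graphSpan S Sstar q :=
  subset_span (Set.mem_insert _ _)

theorem mk_mem_graphSpan_right (q : K × K × K × K) :
    (Sstar, q.2.2.1 • S + q.2.2.2 • Sstar) ∈ graphSpan S Sstar q :=
  subset_span (Set.mem_insert_of_mem _ rfl)

theorem graphSpan_injective (hind : LinearIndependent K ![S, Sstar]) :
    Function.Injective (graphSpan (K := K) S Sstar) := by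
  rintro ⟨a, b, c, d⟩ ⟨a', b', c', d'⟩ h
  have hL : ∀ Q : V, ((0, Q) : V × V) ∈ graphSpan S Sstar (a, b, c, d) → Q = 0 :=
    fun Q => eq_zero_of_zero_mk_mem_span_pair hind
  have h1 : a • S + b • Sstar = a' • S + b' • Sstar :=
    snd_eq_of_mk_mem hL (mk_mem_graphSpan_left _) (by rw [h]; exact mk_mem_graphSpan_left _)
  have h2 : c • S + d • Sstar = c' • S + d' • Sstar :=
    snd_eq_of_mk_mem hL (mk_mem_graphSpan_right _) (by rw [h]; exact mk_mem_graphSpan_right _)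
  obtain ⟨rfl, rfl⟩ := hind.eq_of_pair h1
  obtain ⟨rfl, rfl⟩ := hind.eq_of_pair h2
  rfl

end GraphSpan

theorem nondiagonal_lagrangian_param_general (ℓ : ℕ) [Fact ℓ.Prime]
    (V : Type*) [AddCommGroup V] [Module (ZMod ℓ) V]
    (hdim : Module.finrank (ZMod ℓ) V = 2)
    (ω : LinearMap.BilinForm (ZMod ℓ) V) (halt : ω.IsAlt)
    (S Sstar : V) (hSS : ω S Sstar = 1)
    (hspan : Submodule.span (ZMod ℓ) {S, Sstar} = ⊤)
    (B : LinearMap.BilinForm (ZMod ℓ) (V × V))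
    (hB : ∀ x y : V × V, B x y = ω x.1 y.1 + ω x.2 y.2) :
    ∀ K : Submodule (ZMod ℓ) (V × V),
      ((∀ x ∈ K, ∀ y ∈ K, B x y = 0) ∧ Module.finrank (ZMod ℓ) K = 2 ∧
        (∀ P : V, ((P, 0) : V × V) ∈ K → P = 0) ∧
        (∀ Q : V, ((0, Q) : V × V) ∈ K → Q = 0)) ↔
      ∃! q : ZMod ℓ × ZMod ℓ × ZMod ℓ × ZMod ℓ,
        q.1 * q.2.2.2 - q.2.1 * q.2.2.1 = -1 ∧
        K = Submodule.span (ZMod ℓ)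
          {(S, q.1 • S + q.2.1 • Sstar), (Sstar, q.2.2.1 • S + q.2.2.2 • Sstar)} := by
  have : FiniteDimensional (ZMod ℓ) V := Module.finite_of_finrank_pos (by rw [hdim]; norm_num)
  have hind : LinearIndependent (ZMod ℓ) ![S, Sstar] :=
    halt.linearIndependent_pair (by simp [hSS])
  have hBalt : B.IsAlt := fun x => by rw [hB, halt.self_eq_zero, halt.self_eq_zero, add_zero]
  have hBq (a b c d : ZMod ℓ) :
      B (S, a • S + b • Sstar) (Sstar, c • S + d • Sstar) = 1 + (a * d - b * c) := by
    rw [hB, halt.apply_smul_add_smul, hSS, mul_one]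
  have hrank (q) : finrank (ZMod ℓ) (graphSpan S Sstar q) = 2 :=
    finrank_span_pair (hind.of_map_pair (LinearMap.fst _ V V))
  intro K
  constructor
  · rintro ⟨hiso, hrankK, -, hQ⟩
    have hgraph := K.exists_mk_mem_of_finrank_eq hQ (hrankK.trans hdim.symm)
    obtain ⟨T, hT⟩ := hgraph S
    obtain ⟨T', hT'⟩ := hgraph Sstar
    obtain ⟨a, b, rfl⟩ := mem_span_pair.mp (hspan ▸ mem_top : T ∈ span _ {S, Sstar})
    obtain ⟨c, d, rfl⟩ := mem_span_pair.mp (hspan ▸ mem_top : T' ∈ span _ {S, Sstar})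
    have hK : K = graphSpan S Sstar (a, b, c, d) :=
      (eq_of_le_of_finrank_le (span_le.mpr (Set.pair_subset hT hT'))
        (hrankK.trans (hrank (a, b, c, d)).symm).le).symm
    refine ⟨(a, b, c, d), ⟨?_, hK⟩, fun q hq => graphSpan_injective hind (hq.2.symm.trans hK)⟩
    linear_combination (hBq a b c d).symm.trans (hiso _ hT _ hT')
  · rintro ⟨⟨a, b, c, d⟩, ⟨hdet, rfl⟩, -⟩
    have hTT' : LinearIndependent (ZMod ℓ) ![a • S + b • Sstar, c • S + d • Sstar] :=
      halt.linearIndependent_pair (by rw [halt.apply_smul_add_smul, hSS, hdet]; norm_num)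
    refine ⟨fun x hx y hy => hBalt.apply_eq_zero_of_mem_span_pair ?_ hx hy, hrank _,
      fun P hP => ?_, fun Q hQ => eq_zero_of_zero_mk_mem_span_pair hind hQ⟩
    · rw [hBq, hdet, add_neg_cancel]
    · exact eq_zero_of_mk_zero_mem_span_pair hTT' hP

/-- Non-diagonal Lagrangian subspaces of `V × V`, for `V` a `2`-dimensional symplectic
`F_ℓ`-space with symplectic basis `S, S*` (`ω(S,S*) = 1`), are in bijection with
quadruples `(a,b,c,d) ∈ F_ℓ⁴` with `ad − bc = −1`, via the basis
`{(S, aS + bS*), (S*, cS + dS*)}` of the Lagrangian. -/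
theorem nondiagonal_lagrangian_param (ℓ : ℕ) [Fact ℓ.Prime] (hodd : Odd ℓ)
    (V : Type*) [AddCommGroup V] [Module (ZMod ℓ) V]
    (hdim : Module.finrank (ZMod ℓ) V = 2)
    (ω : LinearMap.BilinForm (ZMod ℓ) V) (halt : ω.IsAlt) (hnd : ω.Nondegenerate)
    (S Sstar : V) (hSS : ω S Sstar = 1)
    (hspan : Submodule.span (ZMod ℓ) {S, Sstar} = ⊤)
    (B : LinearMap.BilinForm (ZMod ℓ) (V × V))
    (hB : ∀ x y : V × V, B x y = ω x.1 y.1 + ω x.2 y.2) :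
    ∀ K : Submodule (ZMod ℓ) (V × V),
      ((∀ x ∈ K, ∀ y ∈ K, B x y = 0) ∧ Module.finrank (ZMod ℓ) K = 2 ∧
        (∀ P : V, ((P, 0) : V × V) ∈ K → P = 0) ∧
        (∀ Q : V, ((0, Q) : V × V) ∈ K → Q = 0)) ↔
      ∃! q : ZMod ℓ × ZMod ℓ × ZMod ℓ × ZMod ℓ,
        q.1 * q.2.2.2 - q.2.1 * q.2.2.1 = -1 ∧
        K = Submodule.span (ZMod ℓ)
          {(S, q.1 • S + q.2.1 • Sstar), (Sstar, q.2.2.1 • S + q.2.2.2 • Sstar)} :=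
  nondiagonal_lagrangian_param_general ℓ V hdim ω halt S Sstar hSS hspan B hB
end

section
/- Let O be the maximal order of the previous context (p ≡ 3 mod 4, p > 3). The group G = {g ∈ M_2(O) : g⁺g = I}, where g⁺ is the conjugate-transpose, consists exactly of the 32 matrices of the form (u 0; 0 v) and (0 u; v 0) with u, v ∈ {±1, ±i}. -/
open Quaternion

/-- The quaternion `i` in `B_{p,∞} = ℍ[ℚ, −1, −p]`. -/
def qi (p : ℕ) : ℍ[ℚ, -1, -(p : ℚ)] := ⟨0, 1, 0, 0⟩

/-- The quaternion `j` in `B_{p,∞} = ℍ[ℚ, −1, −p]`. -/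
def qj (p : ℕ) : ℍ[ℚ, -1, -(p : ℚ)] := ⟨0, 0, 1, 0⟩

/-- The quaternion `k = ij` in `B_{p,∞} = ℍ[ℚ, −1, −p]`. -/
def qk (p : ℕ) : ℍ[ℚ, -1, -(p : ℚ)] := qi p * qj p

/-- Membership in the maximal order `O = Z + Zi + Z(1+j)/2 + Z(i+k)/2`. -/
def memO1728 (p : ℕ) (α : ℍ[ℚ, -1, -(p : ℚ)]) : Prop :=
  ∃ x y z w : ℤ, α = (x : ℚ) • 1 + (y : ℚ) • qi p + ((z : ℚ) / 2) • (1 + qj p)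
    + ((w : ℚ) / 2) • (qi p + qk p)


/-!
Writing `α ∈ O` as `x + y i + z (1 + j)/2 + w (i + k)/2`, its reduced norm is
`N α = ((2x + z)² + (2y + w)² + p (z² + w²)) / 4`. For `p > 3` this forces `z = w = 0` as soon as
`N α ≤ 1` (if `z ≠ 0` then `2x + z = 0`, so `z` is even and `p z² > 4`), so the elements of `O`
of norm at most `1` are `0` and the units `±1, ±i`. The diagonal of `g⁺g = 1` says that the norms
in each column of `g` sum to `1`, so each column holds one unit and one zero; the off-diagonal
entry `ū₁u₂ = 0` rules out two units in the same row.
-/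

namespace QuaternionAlgebra

variable {R : Type*} [CommRing R] {c₁ c₂ : R}

theorem re_star_mul_self (a : ℍ[R, c₁, c₂]) :
    (star a * a).re = a.re ^ 2 - c₁ * a.imI ^ 2 - c₂ * a.imJ ^ 2 + c₁ * c₂ * a.imK ^ 2 := by
  simp only [re_mul, re_star, imI_star, imJ_star, imK_star]
  ring

end QuaternionAlgebra

theorem re_star_mul_self_nonneg {R : Type*} [CommRing R] [LinearOrder R] [IsStrictOrderedRing R]
    {q : R} (hq : 0 ≤ q) (a : ℍ[R, -1, -q]) : 0 ≤ (star a * a).re := by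
  rw [QuaternionAlgebra.re_star_mul_self]
  nlinarith [sq_nonneg a.re, sq_nonneg a.imI, mul_nonneg hq (sq_nonneg a.imJ),
    mul_nonneg hq (sq_nonneg a.imK)]

theorem eq_zero_of_sq_add_mul_sq_le_four {p x z : ℤ} (hp : 3 < p)
    (h : (2 * x + z) ^ 2 + p * z ^ 2 ≤ 4) : z = 0 := by
  by_contra hz
  have hz1 : 1 ≤ z ^ 2 := by nlinarith [Int.one_le_abs hz, sq_abs z]
  have hxz : z = -2 * x := by nlinarith [sq_nonneg (2 * x + z)]
  subst hxz
  have hx1 : 1 ≤ x ^ 2 := by nlinarith [Int.one_le_abs (show x ≠ 0 by omega), sq_abs x]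
  nlinarith [mul_le_mul (show 4 ≤ p by omega) hx1 zero_le_one (by omega)]

/-- The unit group `O^× = {±1, ±i}` of the maximal order. -/
def unitsO1728 (p : ℕ) : Set ℍ[ℚ, -1, -(p : ℚ)] := {1, -1, qi p, -(qi p)}

section MaximalOrder

variable {p : ℕ}

theorem memO1728.exists_coords {α : ℍ[ℚ, -1, -(p : ℚ)]} (h : memO1728 p α) :
    ∃ x y z w : ℤ, α = ⟨x + z / 2, y + w / 2, z / 2, w / 2⟩ := by
  obtain ⟨x, y, z, w, rfl⟩ := h
  exact ⟨x, y, z, w, by ext <;> simp [qi, qj, qk]⟩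

theorem mk_eq_zero_or_mem_unitsO1728 (x y : ℤ) (h : x ^ 2 + y ^ 2 ≤ 1) :
    (⟨x, y, 0, 0⟩ : ℍ[ℚ, -1, -(p : ℚ)]) = 0 ∨ ⟨x, y, 0, 0⟩ ∈ unitsO1728 p := by
  obtain ⟨hx₀, hx₁⟩ : -1 ≤ x ∧ x ≤ 1 := ⟨by nlinarith [sq_nonneg y], by nlinarith [sq_nonneg y]⟩
  obtain ⟨hy₀, hy₁⟩ : -1 ≤ y ∧ y ≤ 1 := ⟨by nlinarith [sq_nonneg x], by nlinarith [sq_nonneg x]⟩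
  interval_cases x <;> interval_cases y <;> norm_num at h <;>
    simp [unitsO1728, qi, QuaternionAlgebra.ext_iff]

theorem memO1728.eq_zero_or_mem_unitsO1728 (hp : 3 < p) {α : ℍ[ℚ, -1, -(p : ℚ)]}
    (hα : memO1728 p α) (h : (star α * α).re ≤ 1) : α = 0 ∨ α ∈ unitsO1728 p := by
  obtain ⟨x, y, z, w, rfl⟩ := hα.exists_coords
  have hN : (2 * x + z) ^ 2 + (2 * y + w) ^ 2 + p * (z ^ 2 + w ^ 2) ≤ (4 : ℤ) := by
    rw [QuaternionAlgebra.re_star_mul_self] at h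
    qify
    linarith
  have hp' : (3 : ℤ) < p := by exact_mod_cast hp
  have hz : z = 0 := eq_zero_of_sq_add_mul_sq_le_four hp' (x := x)
    (by nlinarith [sq_nonneg (2 * y + w), sq_nonneg w])
  have hw : w = 0 := eq_zero_of_sq_add_mul_sq_le_four hp' (x := y)
    (by nlinarith [sq_nonneg (2 * x + z), sq_nonneg z])
  subst hz hw
  simpa using mk_eq_zero_or_mem_unitsO1728 x y (by nlinarith)

theorem star_mul_self_of_mem_unitsO1728 {u : ℍ[ℚ, -1, -(p : ℚ)]} (hu : u ∈ unitsO1728 p) :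
    star u * u = 1 := by
  rcases hu with rfl | rfl | rfl | rfl <;> ext <;> simp [qi]

theorem ne_zero_of_mem_unitsO1728 {u : ℍ[ℚ, -1, -(p : ℚ)]} (hu : u ∈ unitsO1728 p) : u ≠ 0 := by
  rcases hu with rfl | rfl | rfl | rfl <;> simp [qi, QuaternionAlgebra.ext_iff]

theorem star_mul_ne_zero_of_mem_unitsO1728 {u v : ℍ[ℚ, -1, -(p : ℚ)]} (hu : u ∈ unitsO1728 p)
    (hv : v ∈ unitsO1728 p) : star u * v ≠ 0 := by
  intro h
  apply ne_zero_of_mem_unitsO1728 hv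
  calc v = u * star u * v := by rw [← star_comm_self', star_mul_self_of_mem_unitsO1728 hu, one_mul]
    _ = 0 := by rw [mul_assoc, h, mul_zero]

theorem memO1728.column_cases (hp : 3 < p) {a b : ℍ[ℚ, -1, -(p : ℚ)]} (ha : memO1728 p a)
    (hb : memO1728 p b) (h : star a * a + star b * b = 1) :
    (a ∈ unitsO1728 p ∧ b = 0) ∨ (a = 0 ∧ b ∈ unitsO1728 p) := by
  have hN : (star a * a).re + (star b * b).re = 1 := by simpa using congrArg QuaternionAlgebra.re h
  have hNa := re_star_mul_self_nonneg (Nat.cast_nonneg p) a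
  have hNb := re_star_mul_self_nonneg (Nat.cast_nonneg p) b
  rcases ha.eq_zero_or_mem_unitsO1728 hp (by linarith) with rfl | hu <;>
    rcases hb.eq_zero_or_mem_unitsO1728 hp (by linarith) with rfl | hv
  · simp at h
  · exact Or.inr ⟨rfl, hv⟩
  · exact Or.inl ⟨hu, rfl⟩
  · rw [star_mul_self_of_mem_unitsO1728 hu, star_mul_self_of_mem_unitsO1728 hv] at h
    exact absurd (add_eq_left.mp h) one_ne_zero

end MaximalOrder

namespace Matrix

variable {α : Type*} [Semiring α] [StarRing α] {u v : α}

theorem conjTranspose_mul_self_diag (hu : star u * u = 1) (hv : star v * v = 1) :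
    (!![u, 0; 0, v])ᴴ * !![u, 0; 0, v] = 1 := by
  ext i j
  fin_cases i <;> fin_cases j <;> simp [mul_apply, hu, hv]

theorem conjTranspose_mul_self_antidiag (hu : star u * u = 1) (hv : star v * v = 1) :
    (!![0, u; v, 0])ᴴ * !![0, u; v, 0] = 1 := by
  ext i j
  fin_cases i <;> fin_cases j <;> simp [mul_apply, hu, hv]

end Matrix

theorem aut_E1728_sq_general (p : ℕ) (hp3 : 3 < p)
    (g : Matrix (Fin 2) (Fin 2) ℍ[ℚ, -1, -(p : ℚ)]) (hg : ∀ i j, memO1728 p (g i j)) :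
    g.conjTranspose * g = 1 ↔
      ∃ u v : ℍ[ℚ, -1, -(p : ℚ)],
        u ∈ ({1, -1, qi p, -(qi p)} : Set ℍ[ℚ, -1, -(p : ℚ)]) ∧
        v ∈ ({1, -1, qi p, -(qi p)} : Set ℍ[ℚ, -1, -(p : ℚ)]) ∧
        (g = !![u, 0; 0, v] ∨ g = !![0, u; v, 0]) := by
  constructor
  · intro hgI
    have entry (i j : Fin 2) :
        star (g 0 i) * g 0 j + star (g 1 i) * g 1 j = (1 : Matrix (Fin 2) (Fin 2) _) i j := by
      rw [← hgI]
      simp [Matrix.mul_apply]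
    have orth : star (g 0 0) * g 0 1 + star (g 1 0) * g 1 1 = 0 := by simpa using entry 0 1
    have col (j : Fin 2) := (hg 0 j).column_cases hp3 (hg 1 j) (by simpa using entry j j)
    rcases col 0 with ⟨hu, h10⟩ | ⟨h00, hv⟩ <;> rcases col 1 with ⟨hu', h11⟩ | ⟨h01, hv'⟩
    · simp only [h10, h11, mul_zero, add_zero] at orth
      exact absurd orth (star_mul_ne_zero_of_mem_unitsO1728 hu hu')
    · exact ⟨_, _, hu, hv', Or.inl (g.eta_fin_two.trans (by rw [h10, h01]))⟩
    · exact ⟨_, _, hu', hv, Or.inr (g.eta_fin_two.trans (by rw [h00, h11]))⟩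
    · simp only [h00, h01, star_zero, zero_mul, zero_add] at orth
      exact absurd orth (star_mul_ne_zero_of_mem_unitsO1728 hv hv')
  · rintro ⟨u, v, hu, hv, rfl | rfl⟩
    · exact Matrix.conjTranspose_mul_self_diag (star_mul_self_of_mem_unitsO1728 hu)
        (star_mul_self_of_mem_unitsO1728 hv)
    · exact Matrix.conjTranspose_mul_self_antidiag (star_mul_self_of_mem_unitsO1728 hu)
        (star_mul_self_of_mem_unitsO1728 hv)

/-- For `p ≡ 3 (mod 4)`, `p > 3`, the group `G = {g ∈ M₂(O) : g⁺g = I}` (with `g⁺`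
the quaternionic conjugate transpose) consists exactly of the `32` matrices
`(u 0; 0 v)` and `(0 u; v 0)` with `u, v ∈ {±1, ±i}`. -/
theorem aut_E1728_sq (p : ℕ) (hp : p.Prime) (hp4 : p % 4 = 3) (hp3 : 3 < p)
    (g : Matrix (Fin 2) (Fin 2) ℍ[ℚ, -1, -(p : ℚ)]) (hg : ∀ i j, memO1728 p (g i j)) :
    g.conjTranspose * g = 1 ↔
      ∃ u v : ℍ[ℚ, -1, -(p : ℚ)],
        u ∈ ({1, -1, qi p, -(qi p)} : Set ℍ[ℚ, -1, -(p : ℚ)]) ∧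
        v ∈ ({1, -1, qi p, -(qi p)} : Set ℍ[ℚ, -1, -(p : ℚ)]) ∧
        (g = !![u, 0; 0, v] ∨ g = !![0, u; v, 0]) :=
  aut_E1728_sq_general p hp3 g hg
end

section
/- Let p ≡ 3 (mod 4), p > 4ℓ for a prime ℓ ≠ p, and O = Z + Zi + Z(1+j)/2 + Z(i+k)/2 (i^2 = −1, j^2 = −p). If a, b ∈ O satisfy Nrd(a) + Nrd(b) = ℓ, then a, b ∈ Z[i]. -/
open Quaternion

/-- Membership in the subring `Z[i]` of `ℍ[ℚ, −1, −p]`. -/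
def memZi (p : ℕ) (α : ℍ[ℚ, -1, -(p : ℚ)]) : Prop :=
  ∃ m n : ℤ, α = (m : ℚ) • 1 + (n : ℚ) • qi p

/-!
In the coordinates of `O`, `Nrd(x + yi + z(1+j)/2 + w(i+k)/2) ≥ p(z² + w²)/4`. Reduced norms in the
definite algebra `B_{p,∞}` are nonnegative, so `Nrd(a), Nrd(b) ≤ ℓ < p/4`, which forces `z = w = 0`
for both `a` and `b`.
-/

namespace QuaternionAlgebra

theorem re_self_mul_star {R : Type*} [CommRing R] (c₁ c₂ : R) (α : ℍ[R, c₁, c₂]) :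
    (α * star α).re = α.re ^ 2 - c₁ * α.imI ^ 2 - c₂ * α.imJ ^ 2 + c₁ * c₂ * α.imK ^ 2 := by
  simp only [re_mul, re_star, imI_star, imJ_star, imK_star]
  ring

theorem re_self_mul_star_nonneg {R : Type*} [CommRing R] [LinearOrder R] [IsStrictOrderedRing R]
    {c₁ c₂ : R} (h₁ : c₁ ≤ 0) (h₂ : c₂ ≤ 0) (α : ℍ[R, c₁, c₂]) : 0 ≤ (α * star α).re := by
  rw [re_self_mul_star]
  have hI : 0 ≤ -c₁ * α.imI ^ 2 := mul_nonneg (neg_nonneg.2 h₁) (sq_nonneg _)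
  have hJ : 0 ≤ -c₂ * α.imJ ^ 2 := mul_nonneg (neg_nonneg.2 h₂) (sq_nonneg _)
  have hK : 0 ≤ c₁ * c₂ * α.imK ^ 2 :=
    mul_nonneg (mul_nonneg_of_nonpos_of_nonpos h₁ h₂) (sq_nonneg _)
  nlinarith [sq_nonneg α.re]

end QuaternionAlgebra

theorem re_self_mul_star_O1728_coords {p : ℕ} (x y z w : ℤ) :
    let α : ℍ[ℚ, -1, -(p : ℚ)] := (x : ℚ) • 1 + (y : ℚ) • qi p + ((z : ℚ) / 2) • (1 + qj p)
      + ((w : ℚ) / 2) • (qi p + qk p)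
    (α * star α).re = (x + z / 2 : ℚ) ^ 2 + (y + w / 2 : ℚ) ^ 2 + p * ((z : ℚ) ^ 2 + w ^ 2) / 4 := by
  simp [qi, qj, qk]
  ring

theorem memZi_of_memO1728_of_re_self_mul_star_lt {p : ℕ} {α : ℍ[ℚ, -1, -(p : ℚ)]}
    (hα : memO1728 p α) (hlt : (α * star α).re < p / 4) : memZi p α := by
  obtain ⟨x, y, z, w, rfl⟩ := hα
  rw [re_self_mul_star_O1728_coords] at hlt
  have hzw : z = 0 ∧ w = 0 := by
    have : z ^ 2 + w ^ 2 < 1 := by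
      by_contra! h
      have h' : (1 : ℚ) ≤ (z : ℚ) ^ 2 + w ^ 2 := by exact_mod_cast h
      nlinarith [sq_nonneg (x + z / 2 : ℚ), sq_nonneg (y + w / 2 : ℚ),
        mul_le_mul_of_nonneg_left h' (Nat.cast_nonneg (α := ℚ) p)]
    constructor <;> nlinarith [sq_nonneg z, sq_nonneg w]
  obtain ⟨rfl, rfl⟩ := hzw
  exact ⟨x, y, by simp⟩

theorem small_norm_in_Zi_general (p ℓ : ℕ) (hpl : 4 * ℓ < p)
    (a b : ℍ[ℚ, -1, -(p : ℚ)]) (ha : memO1728 p a) (hb : memO1728 p b)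
    (hnorm : (a * star a).re + (b * star b).re = (ℓ : ℚ)) :
    memZi p a ∧ memZi p b := by
  have hℓp : (ℓ : ℚ) < p / 4 := by
    have : (4 * ℓ : ℚ) < p := by exact_mod_cast hpl
    linarith
  have hp : -(p : ℚ) ≤ 0 := neg_nonpos.2 (Nat.cast_nonneg p)
  have ha₀ := QuaternionAlgebra.re_self_mul_star_nonneg (by norm_num) hp a
  have hb₀ := QuaternionAlgebra.re_self_mul_star_nonneg (by norm_num) hp b
  exact ⟨memZi_of_memO1728_of_re_self_mul_star_lt ha (by linarith),
    memZi_of_memO1728_of_re_self_mul_star_lt hb (by linarith)⟩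

/-- Let `p ≡ 3 (mod 4)` and `p > 4ℓ` for a prime `ℓ ≠ p`. If `a, b` in the maximal order
`O = Z + Zi + Z(1+j)/2 + Z(i+k)/2` satisfy `Nrd(a) + Nrd(b) = ℓ`, then `a, b ∈ Z[i]`. -/
theorem small_norm_in_Zi (p ℓ : ℕ) (hp : p.Prime) (hℓ : ℓ.Prime) (hne : ℓ ≠ p)
    (hp4 : p % 4 = 3) (hpl : 4 * ℓ < p)
    (a b : ℍ[ℚ, -1, -(p : ℚ)]) (ha : memO1728 p a) (hb : memO1728 p b)
    (hnorm : (a * star a).re + (b * star b).re = (ℓ : ℚ)) :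
    memZi p a ∧ memZi p b :=
  small_norm_in_Zi_general p ℓ hpl a b ha hb hnorm
end

section
/- Let O be the order of the previous context (p ≡ 2 mod 3, p > 3). The group G = {g ∈ M_2(O) : g⁺g = I} consists exactly of the 72 matrices of the form (u 0; 0 v) and (0 u; v 0) with u, v ∈ {±1, ±(1+i)/2, ±(1−i)/2}. -/
open Quaternion

/-!
For `α = x + y(1+i)/2 + z(i+k)/3 + w(j+k)/2 ∈ O` one has
`12 · nrd α = 3(2x+y)² + (3y+2z)² + 3pw² + p(2z+3w)²`, and `p ≡ 2 (mod 3)` makes this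
divisible by `12`, so reduced norms on `O` are nonnegative integers. The condition `g⁺g = I`
says that each column of `g` has norms summing to `1`, hence consists of a `0` and a unit;
for `p > 3` norm `1` forces `z = w = 0`, leaving the six units of `ℤ[(1+i)/2]`. Orthogonality
of the two columns, together with `u⁺u = uu⁺ = 1` for units, puts the two units on the
diagonal or on the antidiagonal.
-/

/-- The quaternion `i` (with `i² = −3`) in `ℍ[ℚ, −3, −p]`. -/
def qi3 (p : ℕ) : ℍ[ℚ, -3, -(p : ℚ)] := ⟨0, 1, 0, 0⟩

/-- The quaternion `j` in `ℍ[ℚ, −3, −p]`. -/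
def qj3 (p : ℕ) : ℍ[ℚ, -3, -(p : ℚ)] := ⟨0, 0, 1, 0⟩

/-- The quaternion `k = ij` in `ℍ[ℚ, −3, −p]`. -/
def qk3 (p : ℕ) : ℍ[ℚ, -3, -(p : ℚ)] := qi3 p * qj3 p

/-- Membership in the maximal order `O = Z + Z(1+i)/2 + Z(i+k)/3 + Z(j+k)/2`. -/
def memO0 (p : ℕ) (α : ℍ[ℚ, -3, -(p : ℚ)]) : Prop :=
  ∃ x y z w : ℤ, α = (x : ℚ) • 1 + ((y : ℚ) / 2) • (1 + qi3 p)
    + ((z : ℚ) / 3) • (qi3 p + qk3 p) + ((w : ℚ) / 2) • (qj3 p + qk3 p)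

/-- The six units `{±1, ±(1+i)/2, ±(1−i)/2}` of `O`. -/
def unitsO0 (p : ℕ) : Set ℍ[ℚ, -3, -(p : ℚ)] :=
  {1, -1, ((1 : ℚ) / 2) • (1 + qi3 p), -(((1 : ℚ) / 2) • (1 + qi3 p)),
    ((1 : ℚ) / 2) • (1 - qi3 p), -(((1 : ℚ) / 2) • (1 - qi3 p))}

theorem eq_zero_of_star_mul_eq_zero {R : Type*} [Semiring R] [Star R] {u v : R} [IsStarNormal u]
    (hu : star u * u = 1) (h : star u * v = 0) : v = 0 := by
  rw [← one_mul v, ← hu, star_comm_self', mul_assoc, h, mul_zero]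

theorem Matrix.conjTranspose_mul_self_fin_two_eq_one_iff {R : Type*} [Semiring R] [StarRing R]
    {a b c d : R} :
    Matrix.conjTranspose !![a, b; c, d] * !![a, b; c, d] = 1 ↔
      star a * a + star c * c = 1 ∧ star a * b + star c * d = 0 ∧
        star b * a + star d * c = 0 ∧ star b * b + star d * d = 1 := by
  simp [← Matrix.ext_iff, Fin.forall_fin_two, Matrix.mul_apply, Matrix.one_apply, and_assoc]

abbrev elemO0 (p : ℕ) (x y z w : ℤ) : ℍ[ℚ, -3, -(p : ℚ)] :=
  (x : ℚ) • 1 + ((y : ℚ) / 2) • (1 + qi3 p) + ((z : ℚ) / 3) • (qi3 p + qk3 p)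
    + ((w : ℚ) / 2) • (qj3 p + qk3 p)

def normFormO0 (p : ℕ) (x y z w : ℤ) : ℤ :=
  3 * (2 * x + y) ^ 2 + (3 * y + 2 * z) ^ 2 + 3 * p * w ^ 2 + p * (2 * z + 3 * w) ^ 2

theorem star_mul_self_elemO0 (p : ℕ) (x y z w : ℤ) :
    star (elemO0 p x y z w) * elemO0 p x y z w =
      ((normFormO0 p x y z w / 12 : ℚ) : ℍ[ℚ, -3, -(p : ℚ)]) := by
  ext <;> simp [normFormO0, qi3, qj3, qk3, QuaternionAlgebra.re_mul] <;> ring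

theorem normFormO0_nonneg (p : ℕ) (x y z w : ℤ) : 0 ≤ normFormO0 p x y z w := by
  unfold normFormO0; positivity

theorem twelve_dvd_normFormO0 {p : ℕ} (hp : p % 3 = 2) (x y z w : ℤ) :
    12 ∣ normFormO0 p x y z w := by
  obtain ⟨q, rfl⟩ : ∃ q, p = 3 * q + 2 := ⟨p / 3, by omega⟩
  exact ⟨x ^ 2 + x * y + y ^ 2 + y * z + (q + 1) * z ^ 2 + (3 * q + 2) * (z * w + w ^ 2), by
    unfold normFormO0; push_cast; ring⟩

theorem elemO0_eq_zero_of_normFormO0_eq_zero {p : ℕ} (hp : 0 < p) {x y z w : ℤ}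
    (h : normFormO0 p x y z w = 0) : elemO0 p x y z w = 0 := by
  unfold normFormO0 at h
  have hp' : (0 : ℤ) < p := by exact_mod_cast hp
  have hw : w = 0 := by
    nlinarith [sq_nonneg (2 * x + y), sq_nonneg (3 * y + 2 * z), sq_nonneg (2 * z + 3 * w),
      sq_nonneg w]
  subst hw
  have hz : z = 0 := by
    nlinarith [sq_nonneg (2 * x + y), sq_nonneg (3 * y + 2 * z), sq_nonneg z]
  subst hz
  have hy : y = 0 := by nlinarith [sq_nonneg (2 * x + y), sq_nonneg y]
  subst hy
  have hx : x = 0 := by nlinarith [sq_nonneg x]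
  subst hx
  simp [elemO0]

theorem elemO0_mem_unitsO0_of_normFormO0_eq_twelve {p : ℕ} (hp : 5 ≤ p) {x y z w : ℤ}
    (h : normFormO0 p x y z w = 12) : elemO0 p x y z w ∈ unitsO0 p := by
  unfold normFormO0 at h
  have hp' : (5 : ℤ) ≤ p := by exact_mod_cast hp
  have hw : w = 0 := by
    nlinarith [sq_nonneg (2 * x + y), sq_nonneg (3 * y + 2 * z), sq_nonneg (2 * z + 3 * w),
      sq_nonneg w]
  subst hw
  have hz : z = 0 := by
    nlinarith [sq_nonneg (2 * x + y), sq_nonneg (3 * y + 2 * z), sq_nonneg z]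
  subst hz
  have hy : |y| ≤ 1 := by nlinarith [sq_nonneg (2 * x + y), sq_abs y, abs_nonneg y]
  have hx : |x| ≤ 1 := by nlinarith [sq_nonneg (x + y), sq_nonneg y, sq_abs x, abs_nonneg x]
  obtain ⟨hy₁, hy₂⟩ := abs_le.mp hy
  obtain ⟨hx₁, hx₂⟩ := abs_le.mp hx
  interval_cases x <;> interval_cases y <;> norm_num at h <;>
    norm_num [unitsO0, QuaternionAlgebra.ext_iff, qi3, qj3, qk3]

theorem eq_zero_and_mem_unitsO0_of_star_mul_self_add_eq_one {p : ℕ} (hp3mod : p % 3 = 2)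
    (hp3 : 3 < p) {α β : ℍ[ℚ, -3, -(p : ℚ)]} (hα : memO0 p α) (hβ : memO0 p β)
    (h : star α * α + star β * β = 1) :
    (α = 0 ∧ β ∈ unitsO0 p) ∨ (β = 0 ∧ α ∈ unitsO0 p) := by
  obtain ⟨x, y, z, w, rfl⟩ := hα
  obtain ⟨x', y', z', w', rfl⟩ := hβ
  rw [star_mul_self_elemO0, star_mul_self_elemO0, ← QuaternionAlgebra.coe_add,
    ← QuaternionAlgebra.coe_one, QuaternionAlgebra.coe_inj] at h
  have hsum : normFormO0 p x y z w + normFormO0 p x' y' z' w' = 12 := by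
    field_simp at h; exact_mod_cast h
  obtain ⟨m, hm⟩ := twelve_dvd_normFormO0 hp3mod x y z w
  obtain ⟨n, hn⟩ := twelve_dvd_normFormO0 hp3mod x' y' z' w'
  have := normFormO0_nonneg p x y z w
  have := normFormO0_nonneg p x' y' z' w'
  have hp5 : 5 ≤ p := by omega
  rcases (by omega : m = 0 ∧ n = 1 ∨ m = 1 ∧ n = 0) with ⟨rfl, rfl⟩ | ⟨rfl, rfl⟩
  · exact .inl ⟨elemO0_eq_zero_of_normFormO0_eq_zero (by omega) hm,
      elemO0_mem_unitsO0_of_normFormO0_eq_twelve hp5 hn⟩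
  · exact .inr ⟨elemO0_eq_zero_of_normFormO0_eq_zero (by omega) hn,
      elemO0_mem_unitsO0_of_normFormO0_eq_twelve hp5 hm⟩

theorem star_mul_self_of_mem_unitsO0 {p : ℕ} {u : ℍ[ℚ, -3, -(p : ℚ)]}
    (hu : u ∈ unitsO0 p) : star u * u = 1 := by
  simp only [unitsO0, Set.mem_insert_iff, Set.mem_singleton_iff] at hu
  rcases hu with rfl | rfl | rfl | rfl | rfl | rfl <;>
    ext <;> norm_num [qi3, QuaternionAlgebra.re_mul]

theorem zero_notMem_unitsO0 (p : ℕ) : (0 : ℍ[ℚ, -3, -(p : ℚ)]) ∉ unitsO0 p := by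
  simp [unitsO0, QuaternionAlgebra.ext_iff, qi3]

theorem aut_E0_sq_general (p : ℕ) (hp3mod : p % 3 = 2) (hp3 : 3 < p)
    (g : Matrix (Fin 2) (Fin 2) ℍ[ℚ, -3, -(p : ℚ)]) (hg : ∀ i j, memO0 p (g i j)) :
    g.conjTranspose * g = 1 ↔
      ∃ u v : ℍ[ℚ, -3, -(p : ℚ)], u ∈ unitsO0 p ∧ v ∈ unitsO0 p ∧
        (g = !![u, 0; 0, v] ∨ g = !![0, u; v, 0]) := by
  constructor
  · obtain ⟨a, b, c, d, rfl⟩ : ∃ a b c d, g = !![a, b; c, d] :=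
      ⟨_, _, _, _, g.eta_fin_two⟩
    rw [Matrix.conjTranspose_mul_self_fin_two_eq_one_iff]
    rintro ⟨hac, hab, -, hbd⟩
    simp only [Fin.forall_fin_two, Matrix.of_apply, Matrix.cons_val', Matrix.cons_val_fin_one,
      Matrix.cons_val_zero, Matrix.cons_val_one] at hg
    obtain ⟨⟨haO, hbO⟩, hcO, hdO⟩ := hg
    rcases eq_zero_and_mem_unitsO0_of_star_mul_self_add_eq_one hp3mod hp3 haO hcO hac with
        ⟨rfl, hc⟩ | ⟨rfl, ha⟩ <;>
      rcases eq_zero_and_mem_unitsO0_of_star_mul_self_add_eq_one hp3mod hp3 hbO hdO hbd with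
        ⟨rfl, hd⟩ | ⟨rfl, hb⟩ <;>
      simp only [star_zero, zero_mul, mul_zero, zero_add, add_zero] at hab
    · cases eq_zero_of_star_mul_eq_zero (star_mul_self_of_mem_unitsO0 hc) hab
      exact absurd hd (zero_notMem_unitsO0 p)
    · exact ⟨b, c, hb, hc, .inr rfl⟩
    · exact ⟨a, d, ha, hd, .inl rfl⟩
    · cases eq_zero_of_star_mul_eq_zero (star_mul_self_of_mem_unitsO0 ha) hab
      exact absurd hb (zero_notMem_unitsO0 p)
  · rintro ⟨u, v, hu, hv, rfl | rfl⟩ <;>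
      simp [Matrix.conjTranspose_mul_self_fin_two_eq_one_iff,
        star_mul_self_of_mem_unitsO0 hu, star_mul_self_of_mem_unitsO0 hv]

/-- For `p ≡ 2 (mod 3)`, `p > 3`, the group `G = {g ∈ M₂(O) : g⁺g = I}` consists
exactly of the `72` matrices `(u 0; 0 v)` and `(0 u; v 0)` with
`u, v ∈ {±1, ±(1+i)/2, ±(1−i)/2}`. -/
theorem aut_E0_sq (p : ℕ) (hp : p.Prime) (hp3mod : p % 3 = 2) (hp3 : 3 < p)
    (g : Matrix (Fin 2) (Fin 2) ℍ[ℚ, -3, -(p : ℚ)]) (hg : ∀ i j, memO0 p (g i j)) :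
    g.conjTranspose * g = 1 ↔
      ∃ u v : ℍ[ℚ, -3, -(p : ℚ)], u ∈ unitsO0 p ∧ v ∈ unitsO0 p ∧
        (g = !![u, 0; 0, v] ∨ g = !![0, u; v, 0]) :=
  aut_E0_sq_general p hp3mod hp3 g hg
end
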